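/- Let v : ℝ → ℝ be continuously differentiable on [0,1] with v(0) = v(1) = 0. Then ∫₀¹ v(x)² dx ≤ (1/π²) ∫₀¹ (v'(x))² dx. -/

import Mathlib

/-!
With `F = π v² cot (π x)`, Picone's identity `v'² - π² v² = (v' - π v cot (π x))² + F'` holds
on `(0, 1)`, so `F' ≤ v'² - π² v²` there. Since `v` vanishes at the endpoints and is
differentiable there, `v² / sin (π x) → 0` at `0` and at `1`, so `F` is continuous on `[0, 1]`
with `F 0 = F 1 = 0`, and integrating gives `0 ≤ ∫ v'² - π² ∫ v²`.
-/

open Real Set intervalIntegral MeasureTheory Filter Topology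

theorem tendsto_sq_div_of_hasDerivWithinAt {f g : ℝ → ℝ} {f' g' a : ℝ} {s : Set ℝ}
    (hf : HasDerivWithinAt f f' s a) (hg : HasDerivWithinAt g g' s a)
    (hfa : f a = 0) (hga : g a = 0) (hg' : g' ≠ 0) :
    Tendsto (fun x => f x ^ 2 / g x) (𝓝[s \ {a}] a) (𝓝 0) := by
  have hfc : Tendsto f (𝓝[s \ {a}] a) (𝓝 0) :=
    hfa ▸ (hf.continuousWithinAt.mono sdiff_subset).tendsto
  have hlim := ((hasDerivWithinAt_iff_tendsto_slope.mp hf).mul hfc).div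
    (hasDerivWithinAt_iff_tendsto_slope.mp hg) hg'
  rw [mul_zero, zero_div] at hlim
  refine hlim.congr' ?_
  filter_upwards [self_mem_nhdsWithin] with x hx
  have hxa : x - a ≠ 0 := sub_ne_zero.mpr hx.2
  simp only [Pi.div_apply, slope_def_field, hfa, hga, sub_zero]
  rcases eq_or_ne (g x) 0 with hgx | hgx
  · simp [hgx]
  · field_simp

noncomputable def piconeTerm (v : ℝ → ℝ) (x : ℝ) : ℝ := π * cos (π * x) * (v x ^ 2 / sin (π * x))

theorem piconeTerm_of_eq_zero {v : ℝ → ℝ} {x : ℝ} (hv : v x = 0) : piconeTerm v x = 0 := by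
  simp [piconeTerm, hv]

theorem hasDerivAt_piconeTerm {v : ℝ → ℝ} {v' x : ℝ} (hv : HasDerivAt v v' x)
    (hsin : sin (π * x) ≠ 0) :
    HasDerivAt (piconeTerm v)
      (v' ^ 2 - π ^ 2 * v x ^ 2 - (v' - π * v x * cos (π * x) / sin (π * x)) ^ 2) x := by
  have hlin : HasDerivAt (fun y => π * y) π x := by simpa using (hasDerivAt_id x).const_mul π
  have hcos : HasDerivAt (fun y => cos (π * y)) (-sin (π * x) * π) x :=
    (hasDerivAt_cos (π * x)).comp x hlin
  have hsin' : HasDerivAt (fun y => sin (π * y)) (cos (π * x) * π) x :=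
    (hasDerivAt_sin (π * x)).comp x hlin
  refine ((hcos.const_mul π).mul ((hv.pow 2).div hsin' hsin)).congr_deriv ?_
  simp only [Pi.div_apply, Pi.pow_apply]
  field_simp
  ring

theorem continuousWithinAt_piconeTerm {v : ℝ → ℝ} {v' a : ℝ} {s : Set ℝ}
    (hv : HasDerivWithinAt v v' s a) (hva : v a = 0) (hsin : sin (π * a) = 0) :
    ContinuousWithinAt (piconeTerm v) s a := by
  have hcos : cos (π * a) ≠ 0 := by
    intro h; simpa [hsin, h] using sin_sq_add_cos_sq (π * a)
  have hsin' : HasDerivWithinAt (fun x => sin (π * x)) (cos (π * a) * π) s a := by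
    have hlin : HasDerivAt (fun y => π * y) π a := by simpa using (hasDerivAt_id a).const_mul π
    exact ((hasDerivAt_sin (π * a)).comp a hlin).hasDerivWithinAt
  have hquot := tendsto_sq_div_of_hasDerivWithinAt hv hsin' hva hsin
    (mul_ne_zero hcos pi_ne_zero)
  have hcoef : Tendsto (fun x => π * cos (π * x)) (𝓝[s \ {a}] a) (𝓝 (π * cos (π * a))) :=
    (by fun_prop : Continuous fun x => π * cos (π * x)).continuousWithinAt.tendsto
  rw [← continuousWithinAt_sdiff_self, ContinuousWithinAt, piconeTerm_of_eq_zero hva]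
  have hlim := hcoef.mul hquot
  rw [mul_zero] at hlim
  exact hlim

theorem sin_pi_mul_pos {x : ℝ} (hx : x ∈ Ioo (0 : ℝ) 1) : 0 < sin (π * x) :=
  sin_pos_of_pos_of_lt_pi (mul_pos pi_pos hx.1) (by nlinarith [pi_pos, hx.2])

theorem continuousOn_piconeTerm {v : ℝ → ℝ} (hv : DifferentiableOn ℝ v (Icc 0 1))
    (h0 : v 0 = 0) (h1 : v 1 = 0) : ContinuousOn (piconeTerm v) (Icc 0 1) := by
  intro x hx
  rcases eq_endpoints_or_mem_Ioo_of_mem_Icc hx with rfl | rfl | hx'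
  · exact continuousWithinAt_piconeTerm (hv 0 hx).hasDerivWithinAt h0 (by simp)
  · exact continuousWithinAt_piconeTerm (hv 1 hx).hasDerivWithinAt h1 (by simp)
  · have hcos : Continuous fun y => π * cos (π * y) := by fun_prop
    have hsin : Continuous fun y => sin (π * y) := by fun_prop
    exact hcos.continuousWithinAt.mul (((hv x hx).continuousWithinAt.pow 2).div
      hsin.continuousWithinAt (sin_pi_mul_pos hx').ne')

theorem ContDiffOn.integrableOn_deriv_sq {f : ℝ → ℝ} {a b : ℝ} (hf : ContDiffOn ℝ 1 f (Icc a b))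
    (hab : a < b) : IntegrableOn (fun x => deriv f x ^ 2) (Icc a b) := by
  rw [integrableOn_Icc_iff_integrableOn_Ioo]
  have hcont := (hf.continuousOn_derivWithin (uniqueDiffOn_Icc hab) le_rfl).pow 2
  refine (hcont.integrableOn_Icc.mono_set Ioo_subset_Icc_self).congr_fun (fun x hx => ?_)
    measurableSet_Ioo
  simp only [Pi.pow_apply, derivWithin_of_mem_nhds (Icc_mem_nhds hx.1 hx.2)]

theorem stmt_5 (v : ℝ → ℝ)
    (hv : ContDiffOn ℝ 1 v (Set.Icc (0:ℝ) 1))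
    (h0 : v 0 = 0) (h1 : v 1 = 0) :
    (∫ x in (0:ℝ)..1, (v x) ^ 2) ≤ (1 / Real.pi ^ 2) * ∫ x in (0:ℝ)..1, (deriv v x) ^ 2 := by
  have hd : DifferentiableOn ℝ v (Icc 0 1) := hv.differentiableOn one_ne_zero
  have hv2 : IntegrableOn (fun x => π ^ 2 * v x ^ 2) (Icc 0 1) :=
    (continuousOn_const.mul (hv.continuousOn.pow 2)).integrableOn_Icc
  have hdv2 : IntegrableOn (fun x => deriv v x ^ 2) (Icc 0 1) := hv.integrableOn_deriv_sq one_pos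
  have hintegral := sub_le_integral_of_hasDeriv_right_of_le
    (φ := fun x => deriv v x ^ 2 - π ^ 2 * v x ^ 2)
    zero_le_one (continuousOn_piconeTerm hd h0 h1)
    (fun x hx => (hasDerivAt_piconeTerm ((hd x (Ioo_subset_Icc_self hx)).differentiableAt
      (Icc_mem_nhds hx.1 hx.2)).hasDerivAt (sin_pi_mul_pos hx).ne').hasDerivWithinAt)
    (hdv2.sub hv2) (fun x _ => sub_le_self _ (sq_nonneg _))
  rw [piconeTerm_of_eq_zero h0, piconeTerm_of_eq_zero h1, sub_zero,
    integral_sub ((intervalIntegrable_iff_integrableOn_Icc_of_le zero_le_one).mpr hdv2)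
      ((intervalIntegrable_iff_integrableOn_Icc_of_le zero_le_one).mpr hv2),
    intervalIntegral.integral_const_mul] at hintegral
  rw [one_div_mul_eq_div, le_div_iff₀ (by positivity)]
  linarith
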